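/- arXiv:0707.3231 — 4 statements merged into one kernel-verified Lean document; each statement's English description precedes it below -/
import Mathlib

section
/- Let A be a finite set of edge subsets (intact states) of a finite edge set E, each a ∈ A having at least one s-t path, with w(a) = ∏_{e∈a} q(e) ∏_{e∉a}(1−q(e)). Then w(Ω)/w(A) ≤ ∏_{e∈E} (1+q(e)), where w(Ω) = ∑_{a∈A} |P(a)| w(a). -/
/-!
Choose in every intact state `a` a canonical path `π a ⊆ a` (the least path in `a` for a fixed
ranking of all paths), so that `π b = π a` whenever `π a ⊆ b ⊆ a`. In an acyclic graph an
`s`-`t` path `γ ⊆ a` is determined by `γ \ π a`: walking from `s`, two such paths take the same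
next edge, since neither path nor `π a` has two edges leaving the same vertex. Hence
`|P(a)| ≤ 2 ^ |a \ π a|`, the number of `S ⊆ a \ π a`. For fixed `S` and `π₀`, the states with
`π a = π₀` form a family closed under replacing `a ∩ S` by any subset of `S`, so requiring
`S ⊆ a` costs at most the factor `∏ e ∈ S, q e`; summing over `S ⊆ E` gives `∏ e ∈ E, (1 + q e)`.
-/

variable {V : Type*} [Fintype V] [DecidableEq V]

/-- `l` is a list of consecutive edges forming a directed path from `s` to `t`. -/
def IsPathList (s t : V) (l : List (V × V)) : Prop :=
  l ≠ [] ∧ l.Chain' (fun e f => e.2 = f.1) ∧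
    l.head?.map Prod.fst = some s ∧ l.getLast?.map Prod.snd = some t

/-- `γ` is (the edge set of) a directed path from `s` to `t` using edges of `E`. -/
def IsSTPath (E : Finset (V × V)) (s t : V) (γ : Finset (V × V)) : Prop :=
  ∃ l : List (V × V), l.toFinset = γ ∧ (∀ e ∈ l, e ∈ E) ∧ IsPathList s t l

open Finset

section BernoulliWeight

variable {ι : Type*} [DecidableEq ι] (q : ι → ℝ)

def bernoulliWeight (E a : Finset ι) : ℝ := (∏ e ∈ a, q e) * ∏ e ∈ E \ a, (1 - q e)

variable {q}

theorem bernoulliWeight_nonneg {E : Finset ι} (hq : ∀ e ∈ E, q e ∈ Set.Icc (0 : ℝ) 1)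
    {a : Finset ι} (ha : a ⊆ E) : 0 ≤ bernoulliWeight q E a :=
  mul_nonneg (prod_nonneg fun e he => (hq e (ha he)).1)
    (prod_nonneg fun e he => sub_nonneg.mpr (hq e (mem_sdiff.mp he).1).2)

theorem sum_bernoulliWeight_powerset (E : Finset ι) :
    ∑ a ∈ E.powerset, bernoulliWeight q E a = 1 := by
  simp [bernoulliWeight, ← prod_add]

theorem bernoulliWeight_union {E₁ E₂ a₁ a₂ : Finset ι} (hE : Disjoint E₁ E₂)
    (h₁ : a₁ ⊆ E₁) (h₂ : a₂ ⊆ E₂) :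
    bernoulliWeight q (E₁ ∪ E₂) (a₁ ∪ a₂) = bernoulliWeight q E₁ a₁ * bernoulliWeight q E₂ a₂ := by
  have hcompl : (E₁ ∪ E₂) \ (a₁ ∪ a₂) = (E₁ \ a₁) ∪ (E₂ \ a₂) := by
    ext e
    simp only [mem_sdiff, mem_union]
    have := hE.notMem_of_mem_left_finset (a := e)
    have := @h₁ e
    have := @h₂ e
    tauto
  rw [bernoulliWeight, bernoulliWeight, bernoulliWeight, hcompl,
    prod_union (hE.mono h₁ h₂), prod_union (hE.mono sdiff_subset sdiff_subset)]
  ring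

theorem mul_sum_bernoulliWeight_sdiff_union {E S a : Finset ι} (hSa : S ⊆ a) (haE : a ⊆ E) :
    (∏ e ∈ S, q e) * ∑ T ∈ S.powerset, bernoulliWeight q E (a \ S ∪ T)
      = bernoulliWeight q E a := by
  have hE : E = (E \ S) ∪ S := (sdiff_union_of_subset (hSa.trans haE)).symm
  have hdisj : Disjoint (E \ S) S := sdiff_disjoint
  have haS : a \ S ⊆ E \ S := sdiff_subset_sdiff haE le_rfl
  have hfactor : ∀ T ∈ S.powerset, bernoulliWeight q E (a \ S ∪ T)
      = bernoulliWeight q (E \ S) (a \ S) * bernoulliWeight q S T := fun T hT => by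
    rw [hE, bernoulliWeight_union hdisj haS (mem_powerset.mp hT), ← hE]
  calc (∏ e ∈ S, q e) * ∑ T ∈ S.powerset, bernoulliWeight q E (a \ S ∪ T)
      = bernoulliWeight q (E \ S) (a \ S) * bernoulliWeight q S S := by
        rw [sum_congr rfl hfactor, ← mul_sum, sum_bernoulliWeight_powerset]
        simp [bernoulliWeight, mul_comm]
    _ = bernoulliWeight q E a := by
        rw [← bernoulliWeight_union hdisj haS subset_rfl, ← hE, sdiff_union_of_subset hSa]

theorem sum_bernoulliWeight_filter_superset_le {E S : Finset ι}
    (hq : ∀ e ∈ E, q e ∈ Set.Icc (0 : ℝ) 1) (hSE : S ⊆ E) {𝓕 : Finset (Finset ι)}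
    (h𝓕E : ∀ a ∈ 𝓕, a ⊆ E) (h𝓕 : ∀ a ∈ 𝓕, S ⊆ a → ∀ T ⊆ S, a \ S ∪ T ∈ 𝓕) :
    ∑ a ∈ 𝓕 with S ⊆ a, bernoulliWeight q E a
      ≤ (∏ e ∈ S, q e) * ∑ a ∈ 𝓕, bernoulliWeight q E a := by
  set 𝓢 := 𝓕.filter (S ⊆ ·)
  have hinj : Set.InjOn (fun p : Finset ι × Finset ι => p.1 \ S ∪ p.2)
      ((𝓢 ×ˢ S.powerset : Finset _) : Set _) := by
    rintro ⟨a, T⟩ haT ⟨b, U⟩ hbU (h : a \ S ∪ T = b \ S ∪ U)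
    simp only [𝓢, coe_product, Set.mem_prod, mem_coe, mem_filter, mem_powerset] at haT hbU
    obtain ⟨⟨-, hSa⟩, hTS⟩ := haT
    obtain ⟨⟨-, hSb⟩, hUS⟩ := hbU
    ext e
    all_goals
      have he := congrArg (e ∈ ·) h
      simp only [mem_union, mem_sdiff, eq_iff_iff] at he
      have := @hSa e; have := @hSb e; have := @hTS e; have := @hUS e
      tauto
  have hmaps : (𝓢 ×ˢ S.powerset).image (fun p => p.1 \ S ∪ p.2) ⊆ 𝓕 := by
    simp only [image_subset_iff, mem_product, mem_powerset, 𝓢, mem_filter]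
    exact fun p hp => h𝓕 p.1 hp.1.1 hp.1.2 p.2 hp.2
  calc ∑ a ∈ 𝓢, bernoulliWeight q E a
      = (∏ e ∈ S, q e) * ∑ a ∈ 𝓢, ∑ T ∈ S.powerset, bernoulliWeight q E (a \ S ∪ T) := by
        rw [mul_sum]
        refine sum_congr rfl fun a ha => ?_
        have ha := mem_filter.mp ha
        exact (mul_sum_bernoulliWeight_sdiff_union ha.2 (h𝓕E a ha.1)).symm
    _ = (∏ e ∈ S, q e) * ∑ a ∈ (𝓢 ×ˢ S.powerset).image (fun p => p.1 \ S ∪ p.2),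
          bernoulliWeight q E a := by
        rw [sum_image hinj, sum_product]
    _ ≤ (∏ e ∈ S, q e) * ∑ a ∈ 𝓕, bernoulliWeight q E a := by
        refine mul_le_mul_of_nonneg_left (sum_le_sum_of_subset_of_nonneg hmaps
          fun a ha _ => bernoulliWeight_nonneg hq (h𝓕E a ha)) ?_
        exact prod_nonneg fun e he => (hq e (hSE he)).1

end BernoulliWeight

section StableChoice

variable {β : Type*} [Preorder β]

theorem exists_stable_choice [Countable β] (P : Set β) :
    ∃ π : β → β, ∀ a, (∃ p ∈ P, p ≤ a) →
      π a ∈ P ∧ π a ≤ a ∧ ∀ b, π a ≤ b → b ≤ a → π b = π a := by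
  obtain ⟨r, hr⟩ := Countable.exists_injective_nat β
  have hmin : ∀ a, ∃ p, (∃ p ∈ P, p ≤ a) → p ∈ P ∧ p ≤ a ∧ ∀ p' ∈ P, p' ≤ a → r p ≤ r p' := by
    intro a
    by_cases h : ∃ p ∈ P, p ≤ a
    · obtain ⟨p, hp, hmin⟩ := (InvImage.wf r wellFounded_lt).has_min {p | p ∈ P ∧ p ≤ a} h
      exact ⟨p, fun _ => ⟨hp.1, hp.2, fun p' hp' hp'a => not_lt.mp (hmin p' ⟨hp', hp'a⟩)⟩⟩
    · exact ⟨a, fun h' => absurd h' h⟩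
  choose π hπ using hmin
  refine ⟨π, fun a ha => ⟨(hπ a ha).1, (hπ a ha).2.1, fun b hab hba => hr ?_⟩⟩
  have hb : ∃ p ∈ P, p ≤ b := ⟨π a, (hπ a ha).1, hab⟩
  exact le_antisymm ((hπ b hb).2.2 _ (hπ a ha).1 hab)
    ((hπ a ha).2.2 _ (hπ b hb).1 ((hπ b hb).2.1.trans hba))

end StableChoice

section CanonicalPart

variable {ι : Type*} [DecidableEq ι] {q : ι → ℝ} {E : Finset ι} {A : Finset (Finset ι)}
  {π : Finset ι → Finset ι}

theorem sum_bernoulliWeight_filter_subset_sdiff_le (hq : ∀ e ∈ E, q e ∈ Set.Icc (0 : ℝ) 1)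
    (hAE : ∀ a ∈ A, a ⊆ E) (hπ : ∀ a ∈ A, π a ⊆ a)
    (hstable : ∀ a ∈ A, ∀ b ⊆ E, π a ⊆ b → b ⊆ a → b ∈ A ∧ π b = π a)
    {S : Finset ι} (hSE : S ⊆ E) :
    ∑ a ∈ A with S ⊆ a \ π a, bernoulliWeight q E a
      ≤ (∏ e ∈ S, q e) * ∑ a ∈ A, bernoulliWeight q E a := by
  have hfiber : ∀ π₀, ∑ a ∈ A with S ⊆ a \ π a ∧ π a = π₀, bernoulliWeight q E a
      ≤ (∏ e ∈ S, q e) * ∑ a ∈ A with π a = π₀, bernoulliWeight q E a := by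
    intro π₀
    by_cases hS : Disjoint S π₀
    · have hclosed : ∀ a ∈ A.filter (π · = π₀), S ⊆ a → ∀ T ⊆ S,
          a \ S ∪ T ∈ A.filter (π · = π₀) := by
        intro a ha hSa T hTS
        obtain ⟨haA, rfl⟩ := mem_filter.mp ha
        have hπb : π a ⊆ a \ S ∪ T :=
          subset_union_left.trans' (subset_sdiff.mpr ⟨hπ a haA, hS.symm⟩)
        have hba : a \ S ∪ T ⊆ a := union_subset sdiff_subset (hTS.trans hSa)
        exact mem_filter.mpr (hstable a haA _ (hba.trans (hAE a haA)) hπb hba)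
      calc ∑ a ∈ A with S ⊆ a \ π a ∧ π a = π₀, bernoulliWeight q E a
          = ∑ a ∈ A.filter (π · = π₀) with S ⊆ a, bernoulliWeight q E a := by
            rw [filter_filter]
            refine sum_congr (filter_congr fun a _ => ?_) fun _ _ => rfl
            constructor
            · rintro ⟨h, rfl⟩; exact ⟨rfl, (subset_sdiff.mp h).1⟩
            · rintro ⟨rfl, h⟩; exact ⟨subset_sdiff.mpr ⟨h, hS⟩, rfl⟩
        _ ≤ (∏ e ∈ S, q e) * ∑ a ∈ A with π a = π₀, bernoulliWeight q E a :=
            sum_bernoulliWeight_filter_superset_le hq hSE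
              (fun a ha => hAE a (mem_filter.mp ha).1) hclosed
    · have hempty : {a ∈ A | S ⊆ a \ π a ∧ π a = π₀} = ∅ :=
        filter_false_of_mem fun a _ ⟨h, hπa⟩ => hS (hπa ▸ (subset_sdiff.mp h).2)
      rw [hempty, sum_empty]
      exact mul_nonneg (prod_nonneg fun e he => (hq e (hSE he)).1)
        (sum_nonneg fun a ha => bernoulliWeight_nonneg hq (hAE a (mem_filter.mp ha).1))
  calc ∑ a ∈ A with S ⊆ a \ π a, bernoulliWeight q E a
      = ∑ π₀ ∈ A.image π, ∑ a ∈ A with S ⊆ a \ π a ∧ π a = π₀, bernoulliWeight q E a := by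
        rw [← sum_fiberwise_of_maps_to (t := A.image π) (g := π)
          (fun a ha => mem_image_of_mem π (mem_filter.mp ha).1)]
        simp only [filter_filter]
    _ ≤ ∑ π₀ ∈ A.image π, (∏ e ∈ S, q e) * ∑ a ∈ A with π a = π₀, bernoulliWeight q E a :=
        sum_le_sum fun π₀ _ => hfiber π₀
    _ = (∏ e ∈ S, q e) * ∑ a ∈ A, bernoulliWeight q E a := by
        rw [← mul_sum, sum_fiberwise_of_maps_to fun a ha => mem_image_of_mem π ha]

theorem sum_two_pow_card_sdiff_mul_bernoulliWeight_le (hq : ∀ e ∈ E, q e ∈ Set.Icc (0 : ℝ) 1)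
    (hAE : ∀ a ∈ A, a ⊆ E) (hπ : ∀ a ∈ A, π a ⊆ a)
    (hstable : ∀ a ∈ A, ∀ b ⊆ E, π a ⊆ b → b ⊆ a → b ∈ A ∧ π b = π a) :
    ∑ a ∈ A, (2 : ℝ) ^ #(a \ π a) * bernoulliWeight q E a
      ≤ (∏ e ∈ E, (1 + q e)) * ∑ a ∈ A, bernoulliWeight q E a := by
  have hpow : ∀ a ∈ A, (2 : ℝ) ^ #(a \ π a) * bernoulliWeight q E a
      = ∑ S ∈ E.powerset, if S ⊆ a \ π a then bernoulliWeight q E a else 0 := by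
    intro a ha
    have hsub : (a \ π a).powerset ⊆ E.powerset :=
      powerset_mono.mpr (sdiff_subset.trans (hAE a ha))
    simp_rw [← mem_powerset]
    rw [sum_ite_mem, inter_eq_right.mpr hsub, sum_const, card_powerset, nsmul_eq_mul,
      Nat.cast_pow, Nat.cast_ofNat]
  calc ∑ a ∈ A, (2 : ℝ) ^ #(a \ π a) * bernoulliWeight q E a
      = ∑ S ∈ E.powerset, ∑ a ∈ A with S ⊆ a \ π a, bernoulliWeight q E a := by
        rw [sum_congr rfl hpow, sum_comm]
        simp only [sum_filter]
    _ ≤ ∑ S ∈ E.powerset, (∏ e ∈ S, q e) * ∑ a ∈ A, bernoulliWeight q E a :=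
        sum_le_sum fun S hS =>
          sum_bernoulliWeight_filter_subset_sdiff_le hq hAE hπ hstable (mem_powerset.mp hS)
    _ = (∏ e ∈ E, (1 + q e)) * ∑ a ∈ A, bernoulliWeight q E a := by
        rw [← sum_mul, prod_one_add]

end CanonicalPart

section Acyclic

variable {α : Type*} {E : Finset (α × α)} {topo : α → ℕ}

theorem List.IsChain.pairwise_topo_fst_lt (hac : ∀ e ∈ E, topo e.1 < topo e.2)
    {l : List (α × α)} (hlE : ∀ e ∈ l, e ∈ E) (hl : l.IsChain (fun e f => e.2 = f.1)) :
    l.Pairwise (fun e f => topo e.1 < topo f.1) := by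
  have hlt : (l.map (topo ∘ Prod.fst)).IsChain (· < ·) :=
    (List.isChain_map _).mpr <| hl.imp_of_mem_imp fun e f he _ (hef : e.2 = f.1) => by
      simpa [hef] using hac e (hlE e he)
  exact List.pairwise_map.mp hlt.pairwise

variable [DecidableEq α]

theorem IsSTPath.injOn_fst (hac : ∀ e ∈ E, topo e.1 < topo e.2) {s t : α}
    {γ : Finset (α × α)} (hγ : IsSTPath E s t γ) : Set.InjOn Prod.fst (γ : Set (α × α)) := by
  obtain ⟨l, rfl, hlE, -, hl, -⟩ := hγ
  have : Std.Symm (fun e f : α × α => e.1 ≠ f.1) := ⟨fun _ _ h => Ne.symm h⟩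
  have hne : l.Pairwise (fun e f : α × α => e.1 ≠ f.1) :=
    (hl.pairwise_topo_fst_lt hac hlE).imp (fun h => ne_of_apply_ne topo h.ne)
  intro e he f hf hef
  by_contra h
  exact hne.forall (List.mem_toFinset.mp he) (List.mem_toFinset.mp hf) h hef

theorem not_isSTPath_self (hac : ∀ e ∈ E, topo e.1 < topo e.2) (v : α)
    (γ : Finset (α × α)) : ¬ IsSTPath E v v γ := by
  rintro ⟨_ | ⟨e, l⟩, -, hlE, hne, hl, hs, ht⟩
  · exact hne rfl
  obtain ⟨f, hf, hft⟩ : ∃ f ∈ (e :: l).getLast?, f.2 = v := Option.map_eq_some_iff.mp ht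
  have hfl : f ∈ e :: l := List.mem_of_getLast? hf
  have hef : topo e.1 ≤ topo f.1 := by
    rcases List.mem_cons.mp hfl with rfl | hf
    · rfl
    · exact (List.rel_of_pairwise_cons (hl.pairwise_topo_fst_lt hac hlE) hf).le
  have hf := hac f (hlE f hfl)
  simp only [List.head?_cons, Option.map_some, Option.some.injEq] at hs
  rw [hft, ← hs] at hf
  omega

theorem IsSTPath.exists_first_edge (hac : ∀ e ∈ E, topo e.1 < topo e.2) {s t : α}
    {γ : Finset (α × α)} (hγ : IsSTPath E s t γ) :
    ∃ e ∈ γ, e.1 = s ∧ (γ = {e} ∧ e.2 = t ∨ IsSTPath E e.2 t (γ.erase e)) := by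
  obtain ⟨_ | ⟨e, _ | ⟨f, l⟩⟩, rfl, hlE, hne, hl, hs, ht⟩ := hγ
  · exact absurd rfl hne
  · exact ⟨e, by simp, by simpa using hs, Or.inl ⟨by simp, by simpa using ht⟩⟩
  · have he : e ∉ (f :: l).toFinset := fun he =>
      (List.rel_of_pairwise_cons (hl.pairwise_topo_fst_lt hac hlE)
        (List.mem_toFinset.mp he)).false
    refine ⟨e, by simp, by simpa using hs, Or.inr ⟨f :: l, ?_, fun g hg => hlE g (by simp [hg]),
      by simp, hl.tail, ?_, ?_⟩⟩
    · rw [List.toFinset_cons (a := e), erase_insert he]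
    · simpa using (List.isChain_cons_cons.mp hl).1.symm
    · simpa using ht

theorem IsSTPath.eq_of_sdiff_eq (hac : ∀ e ∈ E, topo e.1 < topo e.2) {t : α}
    {π : Finset (α × α)} (hπ : Set.InjOn Prod.fst (π : Set (α × α))) {s : α}
    {γ₁ γ₂ : Finset (α × α)} (h₁ : IsSTPath E s t γ₁) (h₂ : IsSTPath E s t γ₂)
    (hd : γ₁ \ π = γ₂ \ π) : γ₁ = γ₂ := by
  induction γ₁ using Finset.strongInduction generalizing s γ₂ with
  | H γ₁ ih =>
  obtain ⟨e, he₁, hs, hrest₁⟩ := h₁.exists_first_edge hac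
  obtain ⟨e', he₂, hs', hrest₂⟩ := h₂.exists_first_edge hac
  have hee' : e = e' := by
    by_cases hπe : e ∈ π
    · by_cases hπe' : e' ∈ π
      · exact hπ hπe hπe' (hs.trans hs'.symm)
      · have : e' ∈ γ₁ \ π := hd ▸ mem_sdiff.mpr ⟨he₂, hπe'⟩
        exact (h₁.injOn_fst hac) he₁ (mem_sdiff.mp this).1 (hs.trans hs'.symm)
    · have : e ∈ γ₂ \ π := hd ▸ mem_sdiff.mpr ⟨he₁, hπe⟩
      exact (h₂.injOn_fst hac) (mem_sdiff.mp this).1 he₂ (hs.trans hs'.symm)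
  subst hee'
  rcases hrest₁ with ⟨rfl, ht⟩ | h₁ <;> rcases hrest₂ with ⟨rfl, ht'⟩ | h₂
  · rfl
  · exact absurd (ht ▸ h₂) (not_isSTPath_self hac t _)
  · exact absurd (ht' ▸ h₁) (not_isSTPath_self hac t _)
  · have := ih _ (erase_ssubset he₁) h₁ h₂ (by rw [erase_sdiff_comm, erase_sdiff_comm, hd])
    rw [← insert_erase he₁, ← insert_erase he₂, this]

theorem card_filter_isSTPath_subset_le_two_pow (hac : ∀ e ∈ E, topo e.1 < topo e.2) {s t : α}
    {Ps : Finset (Finset (α × α))} (hPs : ∀ γ ∈ Ps, IsSTPath E s t γ) {π a : Finset (α × α)}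
    (hπ : IsSTPath E s t π) : #{γ ∈ Ps | γ ⊆ a} ≤ 2 ^ #(a \ π) := by
  rw [← card_powerset]
  refine card_le_card_of_injOn (· \ π) (fun γ hγ => ?_) fun γ₁ hγ₁ γ₂ hγ₂ hd => ?_
  · exact mem_powerset.mpr (sdiff_subset_sdiff (mem_filter.mp hγ).2 le_rfl)
  · exact (hPs _ (mem_filter.mp hγ₁).1).eq_of_sdiff_eq hac (hπ.injOn_fst hac)
      (hPs _ (mem_filter.mp hγ₂).1) hd

end Acyclic

/-- Karp–Luby bound: `w(Ω)/w(A) ≤ ∏_{e∈E} (1+q(e))`, where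
`w(Ω) = ∑_{a∈A} |P(a)|·w(a)` and `w(A) = ∑_{a∈A} w(a)`. -/
theorem karp_luby_bound
    (E : Finset (V × V)) (s t : V)
    (topo : V → ℕ) (hacyclic : ∀ e ∈ E, topo e.1 < topo e.2)
    (q : V × V → ℝ) (hq : ∀ e ∈ E, q e ∈ Set.Icc (0:ℝ) 1)
    (Ps : Finset (Finset (V × V))) (hPs : ∀ γ, γ ∈ Ps ↔ IsSTPath E s t γ)
    (A : Finset (Finset (V × V)))
    (hA : ∀ a, a ∈ A ↔ a ⊆ E ∧ ∃ γ ∈ Ps, γ ⊆ a)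
    (w : Finset (V × V) → ℝ)
    (hw : ∀ a, w a = (∏ e ∈ a, q e) * ∏ e ∈ E \ a, (1 - q e)) :
    (∑ a ∈ A, ((Ps.filter (fun γ => γ ⊆ a)).card : ℝ) * w a) / (∑ a ∈ A, w a)
      ≤ ∏ e ∈ E, (1 + q e) := by
  obtain rfl : w = bernoulliWeight q E := funext hw
  obtain ⟨π, hπ⟩ := exists_stable_choice (Ps : Set (Finset (V × V)))
  have hAE : ∀ a ∈ A, a ⊆ E := fun a ha => ((hA a).mp ha).1
  have hπA : ∀ a ∈ A, π a ∈ Ps ∧ π a ⊆ a ∧ ∀ b, π a ⊆ b → b ⊆ a → π b = π a :=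
    fun a ha => hπ a ((hA a).mp ha).2
  have hstable : ∀ a ∈ A, ∀ b ⊆ E, π a ⊆ b → b ⊆ a → b ∈ A ∧ π b = π a :=
    fun a ha b hbE hab hba =>
      ⟨(hA b).mpr ⟨hbE, π a, (hπA a ha).1, hab⟩, (hπA a ha).2.2 b hab hba⟩
  refine div_le_of_le_mul₀ (sum_nonneg fun a ha => bernoulliWeight_nonneg hq (hAE a ha))
    (prod_nonneg fun e he => by linarith [(hq e he).1]) ?_
  calc ∑ a ∈ A, (#{γ ∈ Ps | γ ⊆ a} : ℝ) * bernoulliWeight q E a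
      ≤ ∑ a ∈ A, (2 : ℝ) ^ #(a \ π a) * bernoulliWeight q E a :=
        sum_le_sum fun a ha => mul_le_mul_of_nonneg_right (by
          exact_mod_cast card_filter_isSTPath_subset_le_two_pow hacyclic (fun γ => (hPs γ).mp)
            ((hPs _).mp (hπA a ha).1))
          (bernoulliWeight_nonneg hq (hAE a ha))
    _ ≤ (∏ e ∈ E, (1 + q e)) * ∑ a ∈ A, bernoulliWeight q E a :=
        sum_two_pow_card_sdiff_mul_bernoulliWeight_le hq hAE (fun a ha => (hπA a ha).2.1) hstable
end

section
/- Let a ⊆ E be an intact state in a directed acyclic graph, obtained as a = γ ∪ {e₁,…,e_k} where γ is an s-t path and e₁,…,e_k are distinct edges added in order. Define M_{e_i} = 1/2 if both endpoints of e_i are covered by edges of γ ∪ {e₁,…,e_{i−1}}, and M_{e_i} = 1 otherwise. Then 1/|P(a)| ≥ ∏_{i=1}^k M_{e_i}. -/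
variable {V : Type*} [Fintype V] [DecidableEq V]

/-- A vertex `v` is saturated (covered) by an edge set `b` if it is an
endpoint of some edge of `b`. -/
def Saturated (b : Finset (V × V)) (v : V) : Prop :=
  ∃ e ∈ b, e.1 = v ∨ e.2 = v

/-! The set of indices `i` with `M_{e_i} = 1/2` such that `e_i` lies on a path `δ ⊆ a` determines
`δ`, so `|P(a)| ≤ 2 ^ #{i | M_{e_i} = 1/2} = (∏ M_{e_i})⁻¹`.

Two paths `δ, δ'` with the same such set agree on every `e_i`, by downward induction on `i`:
when `M_{e_i} = 1`, some endpoint `u` of `e_i` is touched in `a` only by `e_i` and later edges,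
on which the paths agree, and `u ≠ s, t` because `γ` covers `s` and `t`; since a path through an
inner vertex uses exactly one edge into it and one edge out of it, the paths then also agree on
`e_i`. Finally, paths that agree on all `e_i` can differ only on edges of `γ`; at the first vertex
where they separate, `γ` would need two edges leaving it.
-/

section EdgeList

variable {W α : Type*} [Preorder α] {topo : W → α} {l : List (W × W)}

theorem pairwise_lt_map_topo_fst_of_isChain (hc : l.IsChain (fun e f => e.2 = f.1))
    (hl : ∀ p ∈ l, topo p.1 < topo p.2) : (l.map (topo ∘ Prod.fst)).Pairwise (· < ·) :=
  List.IsChain.pairwise <| (List.isChain_map _).2 <|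
    hc.imp_of_mem_imp fun p _ hp _ h => (hl p hp).trans_eq (congrArg topo h)

theorem pairwise_lt_map_topo_snd_of_isChain (hc : l.IsChain (fun e f => e.2 = f.1))
    (hl : ∀ p ∈ l, topo p.1 < topo p.2) : (l.map (topo ∘ Prod.snd)).Pairwise (· < ·) :=
  List.IsChain.pairwise <| (List.isChain_map _).2 <|
    hc.imp_of_mem_imp fun _ q _ hq h => (congrArg topo h).trans_lt (hl q hq)

end EdgeList

namespace IsSTPath

variable {W : Type*} [DecidableEq W] {E γ δ δ' : Finset (W × W)} {s t : W}

theorem subset (hδ : IsSTPath E s t δ) : δ ⊆ E := by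
  obtain ⟨l, rfl, hlE, -⟩ := hδ
  exact fun p hp => hlE p (List.mem_toFinset.1 hp)

theorem exists_fst_eq_source (hδ : IsSTPath E s t δ) : ∃ g ∈ δ, g.1 = s := by
  obtain ⟨l, rfl, -, hne, -, hs, -⟩ := hδ
  rw [List.head?_eq_some_head hne, Option.map_some, Option.some_inj] at hs
  exact ⟨l.head hne, List.mem_toFinset.2 (List.head_mem hne), hs⟩

theorem exists_snd_eq_target (hδ : IsSTPath E s t δ) : ∃ g ∈ δ, g.2 = t := by
  obtain ⟨l, rfl, -, hne, -, -, ht⟩ := hδ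
  rw [List.getLast?_eq_some_getLast hne, Option.map_some, Option.some_inj] at ht
  exact ⟨l.getLast hne, List.mem_toFinset.2 (List.getLast_mem hne), ht⟩

theorem exists_fst_eq_snd (hδ : IsSTPath E s t δ) {f : W × W} (hf : f ∈ δ) (ht : f.2 ≠ t) :
    ∃ g ∈ δ, g.1 = f.2 := by
  obtain ⟨l, rfl, -, hne, hc, -, hlast⟩ := hδ
  obtain ⟨i, hi, rfl⟩ := List.getElem_of_mem (List.mem_toFinset.1 hf)
  by_cases hi' : i + 1 < l.length
  · exact ⟨l[i + 1], List.mem_toFinset.2 (List.getElem_mem _),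
      (List.IsChain.getElem hc i hi').symm⟩
  · have : l.getLast hne = l[i] := by rw [List.getLast_eq_getElem]; congr 1; omega
    rw [List.getLast?_eq_some_getLast hne, this] at hlast
    exact absurd (Option.some_inj.1 hlast) ht

theorem exists_snd_eq_fst (hδ : IsSTPath E s t δ) {f : W × W} (hf : f ∈ δ) (hs : f.1 ≠ s) :
    ∃ g ∈ δ, g.2 = f.1 := by
  obtain ⟨l, rfl, -, hne, hc, hhead, -⟩ := hδ
  obtain ⟨i, hi, rfl⟩ := List.getElem_of_mem (List.mem_toFinset.1 hf)
  cases i with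
  | zero =>
    rw [List.head?_eq_some_head hne, List.head_eq_getElem] at hhead
    exact absurd (Option.some_inj.1 hhead) hs
  | succ i =>
    exact ⟨l[i], List.mem_toFinset.2 (List.getElem_mem _), List.IsChain.getElem hc i hi⟩

theorem saturated_source (hδ : IsSTPath E s t δ) : Saturated δ s :=
  let ⟨g, hg, hgs⟩ := hδ.exists_fst_eq_source
  ⟨g, hg, .inl hgs⟩

theorem saturated_target (hδ : IsSTPath E s t δ) : Saturated δ t :=
  let ⟨g, hg, hgt⟩ := hδ.exists_snd_eq_target
  ⟨g, hg, .inr hgt⟩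

section Acyclic

variable {α : Type*} [Preorder α] {topo : W → α}

theorem eq_of_fst_eq (hE : ∀ p ∈ E, topo p.1 < topo p.2) (hδ : IsSTPath E s t δ)
    {p q : W × W} (hp : p ∈ δ) (hq : q ∈ δ) (h : p.1 = q.1) : p = q := by
  obtain ⟨l, rfl, hlE, -, hc, -⟩ := hδ
  exact List.inj_on_of_nodup_map (pairwise_lt_map_topo_fst_of_isChain hc fun p hp => hE p (hlE p hp)).nodup
    (List.mem_toFinset.1 hp) (List.mem_toFinset.1 hq) (congrArg topo h)

theorem eq_of_snd_eq (hE : ∀ p ∈ E, topo p.1 < topo p.2) (hδ : IsSTPath E s t δ)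
    {p q : W × W} (hp : p ∈ δ) (hq : q ∈ δ) (h : p.2 = q.2) : p = q := by
  obtain ⟨l, rfl, hlE, -, hc, -⟩ := hδ
  exact List.inj_on_of_nodup_map (pairwise_lt_map_topo_snd_of_isChain hc fun p hp => hE p (hlE p hp)).nodup
    (List.mem_toFinset.1 hp) (List.mem_toFinset.1 hq) (congrArg topo h)

theorem fst_ne_target (hE : ∀ p ∈ E, topo p.1 < topo p.2) (hδ : IsSTPath E s t δ)
    {p : W × W} (hp : p ∈ δ) : p.1 ≠ t := by
  obtain ⟨l, rfl, hlE, hne, hc, -, hlast⟩ := hδ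
  rw [List.getLast?_eq_some_getLast hne, Option.map_some, Option.some_inj] at hlast
  have hpl := List.mem_toFinset.1 hp
  have hle : topo p.2 ≤ topo t := by
    have := ((pairwise_lt_map_topo_snd_of_isChain hc fun p hp => hE p (hlE p hp)).imp le_of_lt).rel_getLast
      (List.mem_map_of_mem (f := topo ∘ Prod.snd) hpl)
    simpa only [List.getLast_map, Function.comp_apply, hlast] using this
  exact fun h => ((hE p (hlE p hpl)).trans_le hle).ne (congrArg topo h)

theorem mem_of_mem_of_agree_at_fst (hE : ∀ p ∈ E, topo p.1 < topo p.2)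
    (hδ : IsSTPath E s t δ) (hδ' : IsSTPath E s t δ') {x : W × W} (hx : x ∈ δ)
    (hs : x.1 ≠ s) (ht : x.1 ≠ t)
    (hagree : ∀ y : W × W, (y.1 = x.1 ∨ y.2 = x.1) → y ≠ x → (y ∈ δ ↔ y ∈ δ')) : x ∈ δ' := by
  by_contra hx'
  obtain ⟨f, hfδ, hf⟩ := hδ.exists_snd_eq_fst hx hs
  have hfx : f ≠ x := by
    rintro rfl
    exact (hE f (hδ.subset hfδ)).ne (congrArg topo hf).symm
  have hfδ' : f ∈ δ' := (hagree f (.inr hf) hfx).1 hfδ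
  obtain ⟨g, hgδ', hg⟩ := hδ'.exists_fst_eq_snd hfδ' (hf ▸ ht)
  have hgx : g ≠ x := fun h => hx' (h ▸ hgδ')
  have hgδ : g ∈ δ := (hagree g (.inl (hg.trans hf)) hgx).2 hgδ'
  exact hgx (hδ.eq_of_fst_eq hE hgδ hx (hg.trans hf))

theorem mem_of_mem_of_agree_at_snd (hE : ∀ p ∈ E, topo p.1 < topo p.2)
    (hδ : IsSTPath E s t δ) (hδ' : IsSTPath E s t δ') {x : W × W} (hx : x ∈ δ)
    (hs : x.2 ≠ s) (ht : x.2 ≠ t)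
    (hagree : ∀ y : W × W, (y.1 = x.2 ∨ y.2 = x.2) → y ≠ x → (y ∈ δ ↔ y ∈ δ')) : x ∈ δ' := by
  by_contra hx'
  obtain ⟨f, hfδ, hf⟩ := hδ.exists_fst_eq_snd hx ht
  have hfx : f ≠ x := by
    rintro rfl
    exact (hE f (hδ.subset hfδ)).ne (congrArg topo hf)
  have hfδ' : f ∈ δ' := (hagree f (.inl hf) hfx).1 hfδ
  obtain ⟨g, hgδ', hg⟩ := hδ'.exists_snd_eq_fst hfδ' (hf ▸ hs)
  have hgx : g ≠ x := fun h => hx' (h ▸ hgδ')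
  have hgδ : g ∈ δ := (hagree g (.inr (hg.trans hf)) hgx).2 hgδ'
  exact hgx (hδ.eq_of_snd_eq hE hgδ hx (hg.trans hf))

theorem mem_iff_mem_of_agree_at (hE : ∀ p ∈ E, topo p.1 < topo p.2)
    (hδ : IsSTPath E s t δ) (hδ' : IsSTPath E s t δ') {x : W × W} {u : W}
    (hxu : x.1 = u ∨ x.2 = u) (hs : u ≠ s) (ht : u ≠ t)
    (hagree : ∀ y : W × W, (y.1 = u ∨ y.2 = u) → y ≠ x → (y ∈ δ ↔ y ∈ δ')) :
    x ∈ δ ↔ x ∈ δ' := by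
  have hagree' y hyu hyx : y ∈ δ' ↔ y ∈ δ := (hagree y hyu hyx).symm
  rcases hxu with rfl | rfl
  · exact ⟨fun hx => mem_of_mem_of_agree_at_fst hE hδ hδ' hx hs ht hagree,
      fun hx => mem_of_mem_of_agree_at_fst hE hδ' hδ hx hs ht hagree'⟩
  · exact ⟨fun hx => mem_of_mem_of_agree_at_snd hE hδ hδ' hx hs ht hagree,
      fun hx => mem_of_mem_of_agree_at_snd hE hδ' hδ hx hs ht hagree'⟩

theorem subset_of_sdiff_subset (hE : ∀ p ∈ E, topo p.1 < topo p.2) (hγ : IsSTPath E s t γ)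
    (hδ : IsSTPath E s t δ) (hδ' : IsSTPath E s t δ') (h : δ \ δ' ⊆ γ) (h' : δ' \ δ ⊆ γ) :
    δ ⊆ δ' := by
  by_contra hsub
  obtain ⟨g, hg, hmin⟩ :=
    Finset.exists_minimalFor (topo ∘ Prod.fst) (δ \ δ') (Finset.sdiff_nonempty.2 hsub)
  obtain ⟨hgδ, hgδ'⟩ := Finset.mem_sdiff.1 hg
  -- `δ` enters `g.1` by an edge of smaller potential, which `δ'` shares by minimality of `g`
  have hreach : g.1 = s ∨ ∃ f ∈ δ', f.2 = g.1 := by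
    refine or_iff_not_imp_left.2 fun hs => ?_
    obtain ⟨f, hfδ, hf⟩ := hδ.exists_snd_eq_fst hgδ hs
    refine ⟨f, by_contra fun hfδ' => ?_, hf⟩
    have hlt : topo f.1 < topo g.1 := hf ▸ hE f (hδ.subset hfδ)
    exact hlt.not_ge (hmin (Finset.mem_sdiff.2 ⟨hfδ, hfδ'⟩) hlt.le)
  obtain ⟨g', hg'δ', hg'⟩ : ∃ g' ∈ δ', g'.1 = g.1 := by
    rcases hreach with hs | ⟨f, hfδ', hf⟩
    · exact hs ▸ hδ'.exists_fst_eq_source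
    · exact hf ▸ hδ'.exists_fst_eq_snd hfδ' (hf ▸ hδ.fst_ne_target hE hgδ)
  have hg'δ : g' ∉ δ := fun hg'δ => hgδ' (hδ.eq_of_fst_eq hE hg'δ hgδ hg' ▸ hg'δ')
  exact hgδ' (hγ.eq_of_fst_eq hE (h' (Finset.mem_sdiff.2 ⟨hg'δ', hg'δ⟩)) (h hg) hg' ▸ hg'δ')

theorem eq_of_sdiff_subset (hE : ∀ p ∈ E, topo p.1 < topo p.2) (hγ : IsSTPath E s t γ)
    (hδ : IsSTPath E s t δ) (hδ' : IsSTPath E s t δ') (h : δ \ δ' ⊆ γ) (h' : δ' \ δ ⊆ γ) :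
    δ = δ' :=
  subset_antisymm (subset_of_sdiff_subset hE hγ hδ hδ' h h')
    (subset_of_sdiff_subset hE hγ hδ' hδ h' h)

end Acyclic

end IsSTPath

theorem Saturated.mono {W : Type*} {b b' : Finset (W × W)} {v : W} (h : b ⊆ b')
    (hv : Saturated b v) : Saturated b' v :=
  let ⟨g, hg, hgv⟩ := hv
  ⟨g, h hg, hgv⟩

section IntactState

variable {W : Type*} [DecidableEq W] {E γ δ δ' : Finset (W × W)} {s t : W} {k : ℕ}
  {e : Fin k → W × W}

def stateBefore (γ : Finset (W × W)) (e : Fin k → W × W) (i : Fin k) : Finset (W × W) :=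
  γ ∪ Finset.image e (Finset.univ.filter (fun j => j < i))

open scoped Classical in
/-- The indices `i` with multiplicity `M_{e_i} = 1/2`. -/
noncomputable def halfIndices (γ : Finset (W × W)) (e : Fin k → W × W) : Finset (Fin k) :=
  Finset.univ.filter fun i =>
    Saturated (stateBefore γ e i) (e i).1 ∧ Saturated (stateBefore γ e i) (e i).2

theorem exists_le_eq_of_not_saturated_stateBefore {i : Fin k} {u : W}
    (hu : ¬ Saturated (stateBefore γ e i) u) {y : W × W} (hy : y ∈ γ ∪ Finset.image e Finset.univ)
    (hyu : y.1 = u ∨ y.2 = u) : ∃ j, i ≤ j ∧ y = e j := by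
  rcases Finset.mem_union.1 hy with hyγ | hye
  · exact absurd ⟨y, Finset.mem_union_left _ hyγ, hyu⟩ hu
  · obtain ⟨j, -, rfl⟩ := Finset.mem_image.1 hye
    refine ⟨j, le_of_not_gt fun hji => hu ⟨e j, ?_, hyu⟩, rfl⟩
    exact Finset.mem_union_right _ (Finset.mem_image_of_mem e (by simpa using hji))

variable {α : Type*} [Preorder α] {topo : W → α}

theorem mem_iff_of_filter_halfIndices_eq (hE : ∀ p ∈ E, topo p.1 < topo p.2)
    (hγ : IsSTPath E s t γ) (hδ : IsSTPath E s t δ) (hδ' : IsSTPath E s t δ')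
    (hδa : δ ⊆ γ ∪ Finset.image e Finset.univ) (hδ'a : δ' ⊆ γ ∪ Finset.image e Finset.univ)
    (htrace : (halfIndices γ e).filter (e · ∈ δ) = (halfIndices γ e).filter (e · ∈ δ'))
    (i : Fin k) : e i ∈ δ ↔ e i ∈ δ' := by
  induction i using WellFoundedGT.induction with
  | _ i ih =>
  by_cases hi : i ∈ halfIndices γ e
  · simpa [hi] using Finset.ext_iff.1 htrace i
  obtain ⟨u, hxu, hu⟩ : ∃ u, ((e i).1 = u ∨ (e i).2 = u) ∧ ¬ Saturated (stateBefore γ e i) u := by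
    simp only [halfIndices, Finset.mem_filter, Finset.mem_univ, true_and, not_and_or] at hi
    exact hi.elim (⟨_, .inl rfl, ·⟩) (⟨_, .inr rfl, ·⟩)
  have hγi : γ ⊆ stateBefore γ e i := Finset.subset_union_left
  refine hδ.mem_iff_mem_of_agree_at hE hδ' hxu
    (fun h => hu (h ▸ hγ.saturated_source.mono hγi))
    (fun h => hu (h ▸ hγ.saturated_target.mono hγi)) fun y hyu hyx => ?_
  by_cases hya : y ∈ γ ∪ Finset.image e Finset.univ
  · obtain ⟨j, hij, rfl⟩ := exists_le_eq_of_not_saturated_stateBefore hu hya hyu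
    exact ih j (hij.lt_of_ne fun h => hyx (h ▸ rfl))
  · exact iff_of_false (fun h => hya (hδa h)) (fun h => hya (hδ'a h))

theorem sdiff_subset_of_forall_mem_iff (hδa : δ ⊆ γ ∪ Finset.image e Finset.univ)
    (hagree : ∀ i, e i ∈ δ ↔ e i ∈ δ') : δ \ δ' ⊆ γ := by
  intro y hy
  obtain ⟨hyδ, hyδ'⟩ := Finset.mem_sdiff.1 hy
  rcases Finset.mem_union.1 (hδa hyδ) with hyγ | hye
  · exact hyγ
  · obtain ⟨j, -, rfl⟩ := Finset.mem_image.1 hye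
    exact absurd ((hagree j).1 hyδ) hyδ'

theorem card_filter_subset_le_two_pow_card_halfIndices (hE : ∀ p ∈ E, topo p.1 < topo p.2)
    (hγ : IsSTPath E s t γ) {Ps : Finset (Finset (W × W))} (hPs : ∀ δ ∈ Ps, IsSTPath E s t δ) :
    (Ps.filter (· ⊆ γ ∪ Finset.image e Finset.univ)).card ≤ 2 ^ (halfIndices γ e).card := by
  rw [← Finset.card_powerset]
  refine Finset.card_le_card_of_injOn (fun δ => (halfIndices γ e).filter (e · ∈ δ))
    (fun δ _ => Finset.mem_powerset.2 (Finset.filter_subset _ _)) ?_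
  intro δ hδ δ' hδ' htrace
  simp only [Finset.mem_coe, Finset.mem_filter] at hδ hδ'
  have hagree := mem_iff_of_filter_halfIndices_eq hE hγ (hPs δ hδ.1) (hPs δ' hδ'.1) hδ.2 hδ'.2
    htrace
  exact IsSTPath.eq_of_sdiff_subset hE hγ (hPs δ hδ.1) (hPs δ' hδ'.1)
    (sdiff_subset_of_forall_mem_iff hδ.2 hagree)
    (sdiff_subset_of_forall_mem_iff hδ'.2 fun i => (hagree i).symm)

end IntactState

open scoped Classical in
theorem inv_card_paths_ge_prod_multiplicities_general
    (E : Finset (V × V)) (s t : V)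
    (topo : V → ℕ) (hacyclic : ∀ e ∈ E, topo e.1 < topo e.2)
    (Ps : Finset (Finset (V × V))) (hPs : ∀ γ, γ ∈ Ps ↔ IsSTPath E s t γ)
    (γ : Finset (V × V)) (hγ : IsSTPath E s t γ)
    (k : ℕ) (e : Fin k → V × V)
    (a : Finset (V × V)) (ha : a = γ ∪ Finset.image e Finset.univ)
    (M : Fin k → ℝ)
    (hM : ∀ i, M i =
      if Saturated (γ ∪ Finset.image e (Finset.univ.filter (fun j => j < i))) (e i).1 ∧
         Saturated (γ ∪ Finset.image e (Finset.univ.filter (fun j => j < i))) (e i).2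
      then (1/2 : ℝ) else 1) :
    ((Ps.filter (fun γ' => γ' ⊆ a)).card : ℝ)⁻¹ ≥ ∏ i, M i := by
  subst ha
  have hprod : ∏ i, M i = (2 ^ (halfIndices γ e).card : ℝ)⁻¹ := by
    rw [Finset.prod_congr rfl fun i _ => hM i, Finset.prod_ite, Finset.prod_const,
      Finset.prod_const_one, mul_one, one_div, inv_pow]
    rfl
  have hγmem : γ ∈ Ps.filter (· ⊆ γ ∪ Finset.image e Finset.univ) :=
    Finset.mem_filter.2 ⟨(hPs γ).2 hγ, Finset.subset_union_left⟩
  have hcard := card_filter_subset_le_two_pow_card_halfIndices (e := e) hacyclic hγ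
    fun δ hδ => (hPs δ).1 hδ
  rw [hprod, ge_iff_le]
  exact inv_anti₀ (by exact_mod_cast Finset.card_pos.2 ⟨γ, hγmem⟩) (by exact_mod_cast hcard)

open scoped Classical in
/-- Lemma 1 of the paper: for an intact state `a = γ ∪ {e₁,…,e_k}` obtained from an
`s`-`t` path `γ` by adding distinct edges `e₁,…,e_k` in order, with multiplicities
`M_{e_i} = 1/2` if both endpoints of `e_i` are already saturated and `1` otherwise,
we have `1/|P(a)| ≥ ∏ M_{e_i}`. -/
theorem inv_card_paths_ge_prod_multiplicities
    (E : Finset (V × V)) (s t : V)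
    (topo : V → ℕ) (hacyclic : ∀ e ∈ E, topo e.1 < topo e.2)
    (Ps : Finset (Finset (V × V))) (hPs : ∀ γ, γ ∈ Ps ↔ IsSTPath E s t γ)
    (γ : Finset (V × V)) (hγ : IsSTPath E s t γ)
    (k : ℕ) (e : Fin k → V × V) (hinj : Function.Injective e)
    (he : ∀ i, e i ∈ E \ γ)
    (a : Finset (V × V)) (ha : a = γ ∪ Finset.image e Finset.univ)
    (M : Fin k → ℝ)
    (hM : ∀ i, M i =
      if Saturated (γ ∪ Finset.image e (Finset.univ.filter (fun j => j < i))) (e i).1 ∧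
         Saturated (γ ∪ Finset.image e (Finset.univ.filter (fun j => j < i))) (e i).2
      then (1/2 : ℝ) else 1) :
    ((Ps.filter (fun γ' => γ' ⊆ a)).card : ℝ)⁻¹ ≥ ∏ i, M i :=
  inv_card_paths_ge_prod_multiplicities_general E s t topo hacyclic Ps hPs γ hγ k e a ha M hM
end

section
/- Let a be an edge set in a directed acyclic graph containing an s-t path, partition a = F^1 ∪ F^{1/2} such that F^1 is acyclic as an undirected edge set (every undirected cycle of a contains an edge of F^{1/2}). Then for every subset H ⊆ F^{1/2}, there is at most one s-t path in a that contains all edges of H and no edge of F^{1/2} \ H; consequently the number of s-t paths in a is at most 2^{|F^{1/2}|}. -/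
/-!
If two `s`-`t` paths `γ₁ ≠ γ₂` contain the same edges of `Fhalf`, all edges of their symmetric
difference lie in `F1`, so the undirected graph `D` of these edges is a nonempty forest and has a
leaf `v`. That is impossible: say `γ₁` leaves `v` along the edge of `D` at `v`. Then `γ₂` passes
through `v` as well (`v = s`, or `γ₂` shares the edge by which `γ₁` enters `v`), so `γ₂` leaves
`v` along an edge outside `D`; this is a second edge of `γ₁` leaving `v`, which cannot exist in an
acyclic digraph. An edge of `D` entering `v` is handled by reversing both paths.
-/

variable {V : Type*} [Fintype V] [DecidableEq V]

open SimpleGraph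

theorem SimpleGraph.IsAcyclic.exists_existsUnique_adj {W : Type*} [Finite W] {G : SimpleGraph W}
    (hG : G.IsAcyclic) {x y : W} (hxy : G.Adj x y) : ∃ u, ∃! w, G.Adj u w := by
  -- the start of a longest path is a leaf
  have : Nonempty W := ⟨x⟩
  obtain ⟨u, v, p, hp, hmax⟩ := Walk.exists_isPath_forall_isPath_length_le_length G
  have hnil : ¬p.Nil := fun hnil => by
    simpa [hnil.length_eq_zero] using hmax x y (.cons hxy .nil) (by simp [hxy.ne])
  refine ⟨u, p.snd, p.adj_snd hnil, fun w huw => hG.eq_snd_of_adj_start hp huw ?_⟩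
  by_contra hw
  simpa using hmax w v (.cons huw.symm p) (hp.cons hw)

theorem Finset.symmDiff_subset_of_inter_eq {α : Type*} [DecidableEq α] {s t F H : Finset α}
    (hs : s ⊆ F ∪ H) (ht : t ⊆ F ∪ H) (h : s ∩ H = t ∩ H) : symmDiff s t ⊆ F := by
  intro e he
  rcases Finset.mem_symmDiff.mp he with ⟨hes, het⟩ | ⟨het, hes⟩
  · refine (Finset.mem_union.mp (hs hes)).resolve_right fun heH => het ?_
    exact (Finset.mem_inter.mp (h ▸ Finset.mem_inter.mpr ⟨hes, heH⟩)).1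
  · refine (Finset.mem_union.mp (ht het)).resolve_right fun heH => hes ?_
    exact (Finset.mem_inter.mp (h ▸ Finset.mem_inter.mpr ⟨het, heH⟩)).1

section DirectedPath

variable {W β : Type*} [Preorder β] {f : W → β} {s t v x y y' : W} {e e' : W × W}
  {l l₁ l₂ : List (W × W)}

theorem isPathList_iff : IsPathList s t l ↔ l ≠ [] ∧ l.IsChain (fun e f => e.2 = f.1) ∧
    l.head?.map Prod.fst = some s ∧ l.getLast?.map Prod.snd = some t :=
  Iff.rfl

theorem isPathList_singleton : IsPathList s t [e] ↔ e = (s, t) := by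
  simp [isPathList_iff, Prod.ext_iff, eq_comm]

theorem isPathList_cons_cons :
    IsPathList s t (e :: e' :: l) ↔ e.1 = s ∧ IsPathList e.2 t (e' :: l) := by
  simp [isPathList_iff, List.isChain_cons_cons, eq_comm]
  tauto

theorem IsPathList.reverse (h : IsPathList s t l) : IsPathList t s (l.reverse.map Prod.swap) := by
  obtain ⟨hne, hchain, hs, ht⟩ := isPathList_iff.mp h
  refine isPathList_iff.mpr ⟨by simpa using hne, ?_, ?_, ?_⟩
  · rw [List.isChain_map, List.isChain_reverse]
    exact hchain.imp fun _ _ h => h.symm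
  · simpa [List.head?_map, List.head?_reverse] using ht
  · simpa [List.getLast?_reverse] using hs

theorem IsPathList.exists_succ (h : IsPathList s t l) (hvt : v ≠ t) (hv : v = s ∨ ∃ x, (x, v) ∈ l) :
    ∃ y, (v, y) ∈ l := by
  induction l generalizing s with
  | nil => exact absurd rfl h.1
  | cons e l ih =>
    cases l with
    | nil =>
      obtain rfl := isPathList_singleton.mp h
      refine ⟨t, ?_⟩
      simp_all
    | cons e' l =>
      obtain ⟨rfl, h'⟩ := isPathList_cons_cons.mp h
      by_cases hve : v = e.1
      · exact ⟨e.2, by simp [hve]⟩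
      have hv' : v = e.2 ∨ ∃ x, (x, v) ∈ e' :: l := by
        rcases hv with hv | ⟨x, hx⟩
        · exact absurd hv hve
        rcases List.mem_cons.mp hx with hx | hx
        · exact Or.inl (congrArg Prod.snd hx)
        · exact Or.inr ⟨x, hx⟩
      obtain ⟨y, hy⟩ := ih h' hv'
      exact ⟨y, List.mem_cons_of_mem _ hy⟩

theorem IsPathList.apply_source_le (h : IsPathList s t l) (hf : ∀ x y, (x, y) ∈ l → f x < f y)
    (hxy : (x, y) ∈ l) : f s ≤ f x := by
  induction l generalizing s with
  | nil => exact absurd rfl h.1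
  | cons e l ih =>
    cases l with
    | nil => simp_all [isPathList_singleton]
    | cons e' l =>
      obtain ⟨rfl, h'⟩ := isPathList_cons_cons.mp h
      rcases List.mem_cons.mp hxy with hxy | hxy
      · exact (congrArg (f ∘ Prod.fst) hxy).ge
      · exact (hf e.1 e.2 List.mem_cons_self).le.trans
          (ih h' (fun a b hab => hf a b (List.mem_cons_of_mem _ hab)) hxy)

theorem IsPathList.succ_unique (h : IsPathList s t l) (hf : ∀ x y, (x, y) ∈ l → f x < f y)
    (hy : (x, y) ∈ l) (hy' : (x, y') ∈ l) : y = y' := by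
  induction l generalizing s with
  | nil => exact absurd rfl h.1
  | cons e l ih =>
    cases l with
    | nil =>
      simp only [List.mem_singleton] at hy hy'
      exact (Prod.mk.inj (hy.trans hy'.symm)).2
    | cons e' l =>
      obtain ⟨rfl, h'⟩ := isPathList_cons_cons.mp h
      have hf' : ∀ a b, (a, b) ∈ e' :: l → f a < f b :=
        fun a b hab => hf a b (List.mem_cons_of_mem _ hab)
      have hfirst : ∀ b, (e.1, b) ∉ e' :: l := fun b hb =>
        (hf e.1 e.2 List.mem_cons_self).not_ge (h'.apply_source_le hf' hb)
      rcases List.mem_cons.mp hy with rfl | hy_tail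
      · rcases List.mem_cons.mp hy' with he | hy'_tail
        · exact (congrArg Prod.snd he).symm
        · exact absurd hy'_tail (hfirst y')
      · rcases List.mem_cons.mp hy' with rfl | hy'_tail
        · exact absurd hy_tail (hfirst y)
        · exact ih h' hf' hy_tail hy'_tail

@[simp]
theorem List.mem_reverse_map_swap {x y : W} : (x, y) ∈ l.reverse.map Prod.swap ↔ (y, x) ∈ l := by
  simp [List.mem_map_swap]

theorem IsPathList.exists_pred (h : IsPathList s t l) (hvs : v ≠ s) (hv : v = t ∨ ∃ y, (v, y) ∈ l) :
    ∃ x, (x, v) ∈ l := by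
  simpa using h.reverse.exists_succ hvs (by simpa using hv)

theorem List.toDual_lt_of_mem_reverse_map_swap (hf : ∀ x y, (x, y) ∈ l → f x < f y) :
    ∀ x y, (x, y) ∈ l.reverse.map Prod.swap →
      (OrderDual.toDual ∘ f) x < (OrderDual.toDual ∘ f) y := by
  simpa using fun x y hxy => hf y x hxy

theorem IsPathList.apply_le_target (h : IsPathList s t l) (hf : ∀ x y, (x, y) ∈ l → f x < f y)
    (hxy : (x, y) ∈ l) : f y ≤ f t :=
  h.reverse.apply_source_le (f := OrderDual.toDual ∘ f) (List.toDual_lt_of_mem_reverse_map_swap hf)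
    (List.mem_reverse_map_swap.mpr hxy)

def edgeSymmDiffGraph (l₁ l₂ : List (W × W)) : SimpleGraph W :=
  SimpleGraph.fromRel fun x y => ¬((x, y) ∈ l₁ ↔ (x, y) ∈ l₂)

theorem edgeSymmDiffGraph_comm : edgeSymmDiffGraph l₁ l₂ = edgeSymmDiffGraph l₂ l₁ := by
  simp [edgeSymmDiffGraph, iff_comm]

theorem edgeSymmDiffGraph_reverse_map_swap :
    edgeSymmDiffGraph (l₁.reverse.map Prod.swap) (l₂.reverse.map Prod.swap) =
      edgeSymmDiffGraph l₁ l₂ := by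
  ext x y
  simp [edgeSymmDiffGraph, or_comm]

theorem IsPathList.exists_ne_adj_of_mem_of_not_mem (h₁ : IsPathList s t l₁)
    (h₂ : IsPathList s t l₂) (hf₁ : ∀ x y, (x, y) ∈ l₁ → f x < f y)
    (hf₂ : ∀ x y, (x, y) ∈ l₂ → f x < f y) (hvy₁ : (v, y) ∈ l₁) (hvy₂ : (v, y) ∉ l₂) :
    ∃ x ≠ y, (edgeSymmDiffGraph l₁ l₂).Adj v x := by
  by_contra! hleaf
  have hsame : ∀ x ≠ y, x ≠ v → ((v, x) ∈ l₁ ↔ (v, x) ∈ l₂) ∧ ((x, v) ∈ l₁ ↔ (x, v) ∈ l₂) := by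
    intro x hxy hxv
    have := hleaf x hxy
    simp only [edgeSymmDiffGraph, fromRel_adj] at this
    tauto
  have hvt : v ≠ t := fun hvt => (hf₁ v y hvy₁).not_ge (hvt ▸ h₁.apply_le_target hf₁ hvy₁)
  have hin : v = s ∨ ∃ x, (x, v) ∈ l₂ := by
    refine or_iff_not_imp_left.mpr fun hvs => ?_
    obtain ⟨x, hx⟩ := h₁.exists_pred hvs (Or.inr ⟨y, hvy₁⟩)
    have hxy : x ≠ y := by
      rintro rfl
      exact (hf₁ _ _ hx).not_gt (hf₁ _ _ hvy₁)
    exact ⟨x, ((hsame x hxy (ne_of_apply_ne f (hf₁ _ _ hx).ne)).2).mp hx⟩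
  obtain ⟨z, hz⟩ := h₂.exists_succ hvt hin
  have hzy : z ≠ y := by
    rintro rfl
    exact hvy₂ hz
  have hz₁ : (v, z) ∈ l₁ := ((hsame z hzy (ne_of_apply_ne f (hf₂ _ _ hz).ne')).1).mpr hz
  exact hzy (h₁.succ_unique hf₁ hz₁ hvy₁)

theorem IsPathList.exists_ne_adj_of_not_iff (h₁ : IsPathList s t l₁)
    (h₂ : IsPathList s t l₂) (hf₁ : ∀ x y, (x, y) ∈ l₁ → f x < f y)
    (hf₂ : ∀ x y, (x, y) ∈ l₂ → f x < f y) (hvy : ¬((v, y) ∈ l₁ ↔ (v, y) ∈ l₂)) :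
    ∃ x ≠ y, (edgeSymmDiffGraph l₁ l₂).Adj v x := by
  by_cases hvy₁ : (v, y) ∈ l₁
  · exact h₁.exists_ne_adj_of_mem_of_not_mem h₂ hf₁ hf₂ hvy₁ (by tauto)
  · rw [edgeSymmDiffGraph_comm]
    exact h₂.exists_ne_adj_of_mem_of_not_mem h₁ hf₂ hf₁ (by tauto) hvy₁

theorem IsPathList.exists_ne_adj (h₁ : IsPathList s t l₁) (h₂ : IsPathList s t l₂)
    (hf₁ : ∀ x y, (x, y) ∈ l₁ → f x < f y) (hf₂ : ∀ x y, (x, y) ∈ l₂ → f x < f y)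
    (hvy : (edgeSymmDiffGraph l₁ l₂).Adj v y) : ∃ x ≠ y, (edgeSymmDiffGraph l₁ l₂).Adj v x := by
  rcases (fromRel_adj _ _ _).mp hvy with ⟨-, hvy | hyv⟩
  · exact h₁.exists_ne_adj_of_not_iff h₂ hf₁ hf₂ hvy
  · rw [← edgeSymmDiffGraph_reverse_map_swap]
    exact h₁.reverse.exists_ne_adj_of_not_iff (f := OrderDual.toDual ∘ f) h₂.reverse
      (List.toDual_lt_of_mem_reverse_map_swap hf₁) (List.toDual_lt_of_mem_reverse_map_swap hf₂)
      (by simpa using hyv)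

theorem edgeSymmDiffGraph_adj_of_not_iff (hf₁ : ∀ x y, (x, y) ∈ l₁ → f x < f y)
    (hf₂ : ∀ x y, (x, y) ∈ l₂ → f x < f y) (hxy : ¬((x, y) ∈ l₁ ↔ (x, y) ∈ l₂)) :
    (edgeSymmDiffGraph l₁ l₂).Adj x y := by
  refine (fromRel_adj _ _ _).mpr ⟨fun hxy' => ?_, Or.inl hxy⟩
  subst hxy'
  by_cases hx : (x, x) ∈ l₁
  · exact (hf₁ x x hx).false
  · exact (hf₂ x x (by tauto)).false

theorem IsSTPath.eq_of_inter_eq [DecidableEq W] [Finite W] {a F H γ₁ γ₂ : Finset (W × W)}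
    (hf : ∀ x y, (x, y) ∈ a → f x < f y) (ha : a ⊆ F ∪ H)
    (hF : (fromRel fun x y => (x, y) ∈ F).IsAcyclic)
    (h₁ : IsSTPath a s t γ₁) (h₂ : IsSTPath a s t γ₂) (hH : γ₁ ∩ H = γ₂ ∩ H) : γ₁ = γ₂ := by
  obtain ⟨l₁, rfl, hl₁a, hl₁⟩ := h₁
  obtain ⟨l₂, rfl, hl₂a, hl₂⟩ := h₂
  have hf₁ : ∀ x y, (x, y) ∈ l₁ → f x < f y := fun x y h => hf x y (hl₁a _ h)
  have hf₂ : ∀ x y, (x, y) ∈ l₂ → f x < f y := fun x y h => hf x y (hl₂a _ h)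
  have hD : symmDiff l₁.toFinset l₂.toFinset ⊆ F := Finset.symmDiff_subset_of_inter_eq
    (fun e he => ha (hl₁a e (List.mem_toFinset.mp he)))
    (fun e he => ha (hl₂a e (List.mem_toFinset.mp he))) hH
  have hmem : ∀ {x y}, ¬((x, y) ∈ l₁ ↔ (x, y) ∈ l₂) → (x, y) ∈ F := fun hxy =>
    hD (by simp only [Finset.mem_symmDiff, List.mem_toFinset]; tauto)
  have hacyclic : (edgeSymmDiffGraph l₁ l₂).IsAcyclic := hF.anti fun x y hxy => by
    simp only [edgeSymmDiffGraph, fromRel_adj] at hxy ⊢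
    exact ⟨hxy.1, hxy.2.imp hmem hmem⟩
  by_contra hne
  obtain ⟨⟨x, y⟩, hxy⟩ : ∃ e, ¬(e ∈ l₁ ↔ e ∈ l₂) := by
    by_contra! h
    exact hne (Finset.ext fun e => by simpa using h e)
  obtain ⟨u, w, huw, huniq⟩ :=
    hacyclic.exists_existsUnique_adj (edgeSymmDiffGraph_adj_of_not_iff hf₁ hf₂ hxy)
  obtain ⟨z, hzw, huz⟩ := hl₁.exists_ne_adj hl₂ hf₁ hf₂ huw
  exact hzw (huniq z huz)

end DirectedPath

theorem paths_determined_by_half_edges_general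
    (E : Finset (V × V)) (s t : V)
    (topo : V → ℕ) (hacyclic : ∀ e ∈ E, topo e.1 < topo e.2)
    (a : Finset (V × V)) (haE : a ⊆ E)
    (F1 Fhalf : Finset (V × V)) (hpart : F1 ∪ Fhalf = a)
    (hforest : (SimpleGraph.fromRel (fun v w => ((v, w) : V × V) ∈ F1)).IsAcyclic)
    (Pa : Finset (Finset (V × V))) (hPa : ∀ γ, γ ∈ Pa ↔ IsSTPath a s t γ) :
    (∀ H ⊆ Fhalf, ∀ γ₁ γ₂ : Finset (V × V),
        IsSTPath a s t γ₁ → IsSTPath a s t γ₂ →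
        γ₁ ∩ Fhalf = H → γ₂ ∩ Fhalf = H → γ₁ = γ₂) ∧
      Pa.card ≤ 2 ^ Fhalf.card := by
  have huniq : ∀ γ₁ γ₂, IsSTPath a s t γ₁ → IsSTPath a s t γ₂ →
      γ₁ ∩ Fhalf = γ₂ ∩ Fhalf → γ₁ = γ₂ := fun _ _ =>
    IsSTPath.eq_of_inter_eq (fun x y h => hacyclic (x, y) (haE h)) hpart.symm.subset hforest
  refine ⟨fun H _ γ₁ γ₂ h₁ h₂ hH₁ hH₂ => huniq γ₁ γ₂ h₁ h₂ (hH₁.trans hH₂.symm), ?_⟩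
  calc Pa.card ≤ Fhalf.powerset.card :=
        Finset.card_le_card_of_injOn (· ∩ Fhalf)
          (fun _ _ => Finset.mem_powerset.mpr Finset.inter_subset_right)
          fun γ₁ hγ₁ γ₂ hγ₂ => huniq γ₁ γ₂ ((hPa γ₁).mp hγ₁) ((hPa γ₂).mp hγ₂)
    _ = 2 ^ Fhalf.card := Finset.card_powerset Fhalf

/-- Key proposition in the proof of Lemma 1: if the edges of an intact state `a` are
partitioned into `F1 ∪ Fhalf` with `F1` acyclic as an undirected edge set, then each
subset `H ⊆ Fhalf` determines at most one `s`-`t` path in `a`; consequently the number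
of `s`-`t` paths in `a` is at most `2^|Fhalf|`. -/
theorem paths_determined_by_half_edges
    (E : Finset (V × V)) (s t : V)
    (topo : V → ℕ) (hacyclic : ∀ e ∈ E, topo e.1 < topo e.2)
    (a : Finset (V × V)) (haE : a ⊆ E) (hintact : ∃ γ, IsSTPath a s t γ)
    (F1 Fhalf : Finset (V × V)) (hpart : F1 ∪ Fhalf = a) (hdisj : Disjoint F1 Fhalf)
    (hforest : (SimpleGraph.fromRel (fun v w => ((v, w) : V × V) ∈ F1)).IsAcyclic)
    (Pa : Finset (Finset (V × V))) (hPa : ∀ γ, γ ∈ Pa ↔ IsSTPath a s t γ) :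
    (∀ H ⊆ Fhalf, ∀ γ₁ γ₂ : Finset (V × V),
        IsSTPath a s t γ₁ → IsSTPath a s t γ₂ →
        γ₁ ∩ Fhalf = H → γ₂ ∩ Fhalf = H → γ₁ = γ₂) ∧
      Pa.card ≤ 2 ^ Fhalf.card :=
  paths_determined_by_half_edges_general E s t topo hacyclic a haE F1 Fhalf hpart hforest Pa hPa
end

section
/- If M₁,…,M_k are random variables with values in {1/2, 1} such that for each i, almost surely P(M_i = 1/2 ∣ M₁,…,M_{i−1}) ≤ min{1, μ(2i+l−1)/m}, then E[∏_{i=1}^k M_i] ≥ ∏_{i=1}^k max{1/2, 1 − μ(2i+l−1)/(2m)}. -/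
/-!
Since `M_i = 1 - ½·𝟙{M_i = ½}`, the bound on `P(M_i = ½ ∣ M_{<i})` gives
`E[M_i ∣ M_{<i}] ≥ max(½, 1 - c_i/2) =: b_i` with `c_i = μ(2i+l-1)/m`. The product
`∏_{j<i} M_j` is measurable for the past σ-algebra of `M_i` and nonnegative, so pulling it out of
the conditional expectation of the last factor gives `E[∏_{j≤i} M_j] ≥ b_i · E[∏_{j<i} M_j]`,
and induction on `k` concludes.
-/

open MeasureTheory

lemma max_le_one_sub_mul_of_le_min {a x c : ℝ} (ha : a ≤ 1) (h : x ≤ min 1 c) :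
    max a (1 - (1 - a) * c) ≤ 1 - (1 - a) * x := by
  have hx1 : x ≤ 1 := h.trans (min_le_left _ _)
  have hxc : x ≤ c := h.trans (min_le_right _ _)
  exact max_le (by nlinarith) (by nlinarith)

section

variable {Ω : Type*} {m mΩ : MeasurableSpace Ω} {P : Measure Ω}

lemma integral_mul_condExp_of_stronglyMeasurable [IsFiniteMeasure P] (hm : m ≤ mΩ)
    {f g : Ω → ℝ} (hf : StronglyMeasurable[m] f) {C : ℝ} (hfC : ∀ ω, |f ω| ≤ C)
    (hg : Integrable g P) :
    ∫ ω, f ω * (P[g | m]) ω ∂P = ∫ ω, f ω * g ω ∂P := by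
  have hfg : Integrable (f * g) P :=
    hg.bdd_mul (hf.mono hm).aestronglyMeasurable (ae_of_all _ hfC)
  have : IsFiniteMeasure (P.trim hm) := isFiniteMeasure_trim hm
  calc ∫ ω, f ω * (P[g | m]) ω ∂P = ∫ ω, (P[f * g | m]) ω ∂P :=
        integral_congr_ae (condExp_mul_of_stronglyMeasurable_left hf hfg hg).symm
    _ = ∫ ω, f ω * g ω ∂P := integral_condExp hm

lemma condExp_eq_one_sub_mul_condExp_indicator [IsFiniteMeasure P] (hm : m ≤ mΩ)
    {f : Ω → ℝ} (hf : Measurable f) {a : ℝ} (hfa : ∀ ω, f ω = a ∨ f ω = 1) :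
    P[f | m] =ᵐ[P]
      fun ω => 1 - (1 - a) * (P[Set.indicator {ω' | f ω' = a} (fun _ => (1:ℝ)) | m]) ω := by
  set I := Set.indicator {ω' | f ω' = a} (fun _ => (1:ℝ))
  have hI : Integrable I P :=
    (integrable_const 1).indicator (hf (measurableSet_singleton a))
  have hf_eq : f = (fun _ => 1) - (1 - a) • I := by
    funext ω
    rcases hfa ω with h | h
    · simp [I, h]
    · by_cases ha : (1 : ℝ) = a <;> simp [I, h, ha]
  filter_upwards [condExp_sub (integrable_const (1:ℝ)) (hI.smul (1 - a)) m,
    condExp_smul (m := m) (μ := P) (1 - a) I] with ω hsub hsmul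
  rw [hf_eq, hsub, Pi.sub_apply, hsmul, condExp_const hm]
  rfl

theorem le_integral_prod_of_le_condExp [IsProbabilityMeasure P] {k : ℕ} (M : Fin k → Ω → ℝ)
    (G : Fin k → MeasurableSpace Ω) (b : Fin k → ℝ) (hG : ∀ i, G i ≤ mΩ)
    (hadapted : ∀ i j, j < i → Measurable[G i] (M j)) (hM : ∀ i, Measurable (M i))
    (hM0 : ∀ i ω, 0 ≤ M i ω) (hMC : ∀ i, ∃ C, ∀ ω, M i ω ≤ C) (hb0 : ∀ i, 0 ≤ b i)
    (hb : ∀ i, ∀ᵐ ω ∂P, b i ≤ (P[M i | G i]) ω) :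
    ∏ i, b i ≤ ∫ ω, ∏ i, M i ω ∂P := by
  induction k with
  | zero => simp
  | succ k ih =>
    set F : Ω → ℝ := fun ω => ∏ j : Fin k, M j.castSucc ω
    have hF_ge : ∏ j : Fin k, b j.castSucc ≤ ∫ ω, F ω ∂P :=
      ih (fun j => M j.castSucc) (fun j => G j.castSucc) _ (fun j => hG _)
        (fun i j hji => hadapted _ _ (Fin.castSucc_lt_castSucc_iff.2 hji)) (fun j => hM _)
        (fun j => hM0 _) (fun j => hMC _) (fun j => hb0 _) (fun j => hb _)
    have hF_meas : Measurable[G (Fin.last k)] F :=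
      Finset.measurable_prod _ fun j _ => hadapted _ _ (Fin.castSucc_lt_last j)
    have hF0 : ∀ ω, 0 ≤ F ω := fun ω => Finset.prod_nonneg fun j _ => hM0 _ ω
    obtain ⟨C, hC⟩ : ∃ C, ∀ ω, |F ω| ≤ C := by
      choose C hC using hMC
      refine ⟨∏ j : Fin k, C j.castSucc, fun ω => ?_⟩
      rw [abs_of_nonneg (hF0 ω)]
      exact Finset.prod_le_prod (fun j _ => hM0 _ ω) (fun j _ => hC _ ω)
    obtain ⟨C', hC'⟩ := hMC (Fin.last k)
    have hM_int : Integrable (M (Fin.last k)) P :=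
      .of_bound (hM _).aestronglyMeasurable C' (ae_of_all _ fun ω => by
        rw [Real.norm_eq_abs, abs_of_nonneg (hM0 _ ω)]; exact hC' ω)
    calc ∏ i, b i = (∏ j : Fin k, b j.castSucc) * b (Fin.last k) := Fin.prod_univ_castSucc b
      _ ≤ (∫ ω, F ω ∂P) * b (Fin.last k) := mul_le_mul_of_nonneg_right hF_ge (hb0 _)
      _ = ∫ ω, F ω * b (Fin.last k) ∂P := (integral_mul_const _ _).symm
      _ ≤ ∫ ω, F ω * (P[M (Fin.last k) | G (Fin.last k)]) ω ∂P := by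
        refine integral_mono_ae ?_ ?_ ?_
        · exact (Integrable.of_bound (hF_meas.mono (hG _) le_rfl).aestronglyMeasurable C
            (ae_of_all _ hC)).mul_const _
        · exact integrable_condExp.bdd_mul
            (hF_meas.mono (hG _) le_rfl).aestronglyMeasurable (ae_of_all _ hC)
        · filter_upwards [hb (Fin.last k)] with ω hω
          exact mul_le_mul_of_nonneg_left hω (hF0 ω)
      _ = ∫ ω, F ω * M (Fin.last k) ω ∂P :=
        integral_mul_condExp_of_stronglyMeasurable (hG _) hF_meas.stronglyMeasurable hC hM_int
      _ = ∫ ω, ∏ i, M i ω ∂P := by simp only [F, Fin.prod_univ_castSucc]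

end

theorem expectation_prod_multiplicities_ge_general
    {Ω : Type*} [MeasurableSpace Ω] (P : Measure Ω) [IsProbabilityMeasure P]
    (k : ℕ) (μ m l : ℝ)
    (M : Fin k → Ω → ℝ) (hmeas : ∀ i, Measurable (M i))
    (hval : ∀ i ω, M i ω = 1/2 ∨ M i ω = 1)
    (hcond : ∀ i : Fin k, ∀ᵐ ω ∂P,
      (P[Set.indicator {ω' | M i ω' = 1/2} (fun _ => (1:ℝ)) |
          ⨆ j : Fin k, ⨆ _ : j < i, MeasurableSpace.comap (M j) inferInstance]) ω
        ≤ min 1 (μ * (2 * ((i : ℝ) + 1) + l - 1) / m)) :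
    ∫ ω, ∏ i, M i ω ∂P ≥
      ∏ i : Fin k, max (1/2 : ℝ) (1 - μ * (2 * ((i : ℝ) + 1) + l - 1) / (2 * m)) := by
  let G : Fin k → MeasurableSpace Ω :=
    fun i => ⨆ j : Fin k, ⨆ _ : j < i, MeasurableSpace.comap (M j) inferInstance
  have hG : ∀ i, G i ≤ ‹MeasurableSpace Ω› := fun i => iSup₂_le fun j _ => (hmeas j).comap_le
  have hadapted : ∀ i j, j < i → Measurable[G i] (M j) := fun i j hji =>
    (comap_measurable (M j)).mono
      (le_iSup₂ (f := fun j (_ : j < i) => MeasurableSpace.comap (M j) inferInstance) j hji)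
      le_rfl
  have hM_bounds : ∀ i ω, 0 ≤ M i ω ∧ M i ω ≤ 1 := fun i ω => by
    rcases hval i ω with h | h <;> norm_num [h]
  refine le_integral_prod_of_le_condExp M G _ hG hadapted hmeas (fun i ω => (hM_bounds i ω).1)
    (fun i => ⟨1, fun ω => (hM_bounds i ω).2⟩) (fun i => le_max_of_le_left (by norm_num))
    fun i => ?_
  filter_upwards [condExp_eq_one_sub_mul_condExp_indicator (hG i) (hmeas i) (hval i), hcond i]
    with ω hω hcond_ω
  rw [hω, show μ * (2 * ((i : ℝ) + 1) + l - 1) / (2 * m)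
    = (1 - 1/2) * (μ * (2 * ((i : ℝ) + 1) + l - 1) / m) by ring]
  exact max_le_one_sub_mul_of_le_min (by norm_num) hcond_ω

/-- If `M₁,…,M_k` take values in `{1/2,1}` and almost surely
`P(M_i = 1/2 ∣ M₁,…,M_{i−1}) ≤ min{1, μ(2i+l−1)/m}`, then
`E[∏ M_i] ≥ ∏ max{1/2, 1 − μ(2i+l−1)/(2m)}`. -/
theorem expectation_prod_multiplicities_ge
    {Ω : Type*} [MeasurableSpace Ω] (P : Measure Ω) [IsProbabilityMeasure P]
    (k : ℕ) (μ m l : ℝ) (hμ : 0 < μ) (hm : 0 < m) (hl : 0 ≤ l)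
    (M : Fin k → Ω → ℝ) (hmeas : ∀ i, Measurable (M i))
    (hval : ∀ i ω, M i ω = 1/2 ∨ M i ω = 1)
    (hcond : ∀ i : Fin k, ∀ᵐ ω ∂P,
      (P[Set.indicator {ω' | M i ω' = 1/2} (fun _ => (1:ℝ)) |
          ⨆ j : Fin k, ⨆ _ : j < i, MeasurableSpace.comap (M j) inferInstance]) ω
        ≤ min 1 (μ * (2 * ((i : ℝ) + 1) + l - 1) / m)) :
    ∫ ω, ∏ i, M i ω ∂P ≥
      ∏ i : Fin k, max (1/2 : ℝ) (1 - μ * (2 * ((i : ℝ) + 1) + l - 1) / (2 * m)) :=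
  expectation_prod_multiplicities_ge_general P k μ m l M hmeas hval hcond
end
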